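/- (Cost difference lemma, telescoping part.) Let K and K′ be stabilizing gains. For every x ∈ ℝ^d, letting x′_t := (A−BK′)^t x, the series ∑_{t=0}^∞ A_K(x′_t, −K′x′_t) converges and x^⊤ P_{K′} x − x^⊤ P_K x = ∑_{t=0}^∞ A_K(x′_t, −K′x′_t). -/

import Mathlib

open Matrix

noncomputable section

/-- Spectral radius of a real square matrix: the supremum of the absolute values of its
complex eigenvalues. -/
def specRad {d : ℕ} (M : Matrix (Fin d) (Fin d) ℝ) : ℝ :=
  ⨆ μ : spectrum ℂ (M.map (algebraMap ℝ ℂ)), ‖(μ : ℂ)‖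

/-- Minimum singular value of a real matrix. -/
def sigmaMin {m n : ℕ} (M : Matrix (Fin m) (Fin n) ℝ) : ℝ :=
  Real.sqrt (⨅ i, (show (Mᵀ * M).IsHermitian by
    rw [← Matrix.conjTranspose_eq_transpose_of_trivial]
    exact Matrix.isHermitian_conjTranspose_mul_self M).eigenvalues i)

/-- Spectral norm (maximum singular value) of a real matrix. -/
def specNorm {m n : ℕ} (M : Matrix (Fin m) (Fin n) ℝ) : ℝ :=
  Real.sqrt (⨆ i, (show (Mᵀ * M).IsHermitian by
    rw [← Matrix.conjTranspose_eq_transpose_of_trivial]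
    exact Matrix.isHermitian_conjTranspose_mul_self M).eigenvalues i)

/-- Frobenius norm of a real matrix. -/
def frobNorm {m n : ℕ} (M : Matrix (Fin m) (Fin n) ℝ) : ℝ :=
  Real.sqrt (∑ i, ∑ j, (M i j) ^ 2)

/-- For a stabilizing gain `K`, the unique positive semidefinite solution `P_K` of
`P = Q + Kᵀ R K + (A - B K)ᵀ P (A - B K)`, given by its convergent series representation. -/
def Pmat {d k : ℕ} (A : Matrix (Fin d) (Fin d) ℝ) (B : Matrix (Fin d) (Fin k) ℝ)
    (Q : Matrix (Fin d) (Fin d) ℝ) (R : Matrix (Fin k) (Fin k) ℝ)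
    (K : Matrix (Fin k) (Fin d) ℝ) : Matrix (Fin d) (Fin d) ℝ :=
  ∑' t : ℕ, ((A - B * K)ᵀ) ^ t * (Q + Kᵀ * R * K) * (A - B * K) ^ t

/-- The state correlation matrix `Σ_K = ∑_{t} (A-BK)^t Σ₀ ((A-BK)ᵀ)^t`. -/
def SigmaMat {d k : ℕ} (A : Matrix (Fin d) (Fin d) ℝ) (B : Matrix (Fin d) (Fin k) ℝ)
    (Sig0 : Matrix (Fin d) (Fin d) ℝ) (K : Matrix (Fin k) (Fin d) ℝ) :
    Matrix (Fin d) (Fin d) ℝ :=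
  ∑' t : ℕ, (A - B * K) ^ t * Sig0 * ((A - B * K)ᵀ) ^ t

/-- The LQR cost `C(K) = Tr(Σ₀ P_K)`. -/
def Cost {d k : ℕ} (A : Matrix (Fin d) (Fin d) ℝ) (B : Matrix (Fin d) (Fin k) ℝ)
    (Q : Matrix (Fin d) (Fin d) ℝ) (R : Matrix (Fin k) (Fin k) ℝ)
    (Sig0 : Matrix (Fin d) (Fin d) ℝ) (K : Matrix (Fin k) (Fin d) ℝ) : ℝ :=
  (Sig0 * Pmat A B Q R K).trace

/-- `E_K = (R + Bᵀ P_K B) K - Bᵀ P_K A`. -/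
def Emat {d k : ℕ} (A : Matrix (Fin d) (Fin d) ℝ) (B : Matrix (Fin d) (Fin k) ℝ)
    (Q : Matrix (Fin d) (Fin d) ℝ) (R : Matrix (Fin k) (Fin k) ℝ)
    (K : Matrix (Fin k) (Fin d) ℝ) : Matrix (Fin k) (Fin d) ℝ :=
  (R + Bᵀ * Pmat A B Q R K * B) * K - Bᵀ * Pmat A B Q R K * A

/-- The value function `V_K(x) = xᵀ P_K x`. -/
def Vval {d k : ℕ} (A : Matrix (Fin d) (Fin d) ℝ) (B : Matrix (Fin d) (Fin k) ℝ)
    (Q : Matrix (Fin d) (Fin d) ℝ) (R : Matrix (Fin k) (Fin k) ℝ)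
    (K : Matrix (Fin k) (Fin d) ℝ) (x : Fin d → ℝ) : ℝ :=
  x ⬝ᵥ (Pmat A B Q R K).mulVec x

/-- The state-action value `Q_K(x,u) = xᵀQx + uᵀRu + V_K(Ax + Bu)`. -/
def Qval {d k : ℕ} (A : Matrix (Fin d) (Fin d) ℝ) (B : Matrix (Fin d) (Fin k) ℝ)
    (Q : Matrix (Fin d) (Fin d) ℝ) (R : Matrix (Fin k) (Fin k) ℝ)
    (K : Matrix (Fin k) (Fin d) ℝ) (x : Fin d → ℝ) (u : Fin k → ℝ) : ℝ :=
  x ⬝ᵥ Q.mulVec x + u ⬝ᵥ R.mulVec u + Vval A B Q R K (A.mulVec x + B.mulVec u)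

/-- The advantage `A_K(x,u) = Q_K(x,u) - V_K(x)`. -/
def Adv {d k : ℕ} (A : Matrix (Fin d) (Fin d) ℝ) (B : Matrix (Fin d) (Fin k) ℝ)
    (Q : Matrix (Fin d) (Fin d) ℝ) (R : Matrix (Fin k) (Fin k) ℝ)
    (K : Matrix (Fin k) (Fin d) ℝ) (x : Fin d → ℝ) (u : Fin k → ℝ) : ℝ :=
  Qval A B Q R K x u - Vval A B Q R K x


section AuxLemmas

open Filter

attribute [local instance] Matrix.linftyOpNormedRing Matrix.linftyOpNormedAlgebra

private lemma entry_le_linfty {d : ℕ} (N : Matrix (Fin d) (Fin d) ℂ) (i j : Fin d) :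
    ‖N i j‖ ≤ ‖N‖ := by
  have h1 : ‖N i j‖₊ ≤ ‖N‖₊ := by
    rw [Matrix.linfty_opNNNorm_def]
    refine le_trans (Finset.single_le_sum (f := fun j' => ‖N i j'‖₊) (fun j' _ => zero_le)
      (Finset.mem_univ j)) (Finset.le_sup (f := fun i' => ∑ j', ‖N i' j'‖₊) (Finset.mem_univ i))
  exact_mod_cast h1

private lemma entry_pow_bound {d : ℕ} (M : Matrix (Fin d) (Fin d) ℝ) (h : specRad M < 1) :
    ∃ c r : ℝ, 0 < c ∧ 0 < r ∧ r < 1 ∧ ∀ (n : ℕ) (i j : Fin d), |(M ^ n) i j| ≤ c * r ^ n := by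
  set Mc : Matrix (Fin d) (Fin d) ℂ := M.map (algebraMap ℝ ℂ) with hMc
  have hnormentry : ∀ (n : ℕ) (i j : Fin d), |(M ^ n) i j| ≤ ‖Mc ^ n‖ := by
    intro n i j
    have hmap : Mc ^ n = (M ^ n).map (algebraMap ℝ ℂ) := by
      rw [hMc]
      simpa using (map_pow ((algebraMap ℝ ℂ).mapMatrix) M n).symm
    have h1 : ‖(Mc ^ n) i j‖ ≤ ‖Mc ^ n‖ := entry_le_linfty _ i j
    have h2 : (Mc ^ n) i j = (((M ^ n) i j : ℝ) : ℂ) := by rw [hmap, Matrix.map_apply]; rfl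
    rw [h2, Complex.norm_real, Real.norm_eq_abs] at h1
    exact h1
  have hρ : spectralRadius ℂ Mc < 1 := by
    rcases (spectrum ℂ Mc).eq_empty_or_nonempty with he | hne
    · rw [spectralRadius]
      simp [he]
    · refine spectrum.spectralRadius_lt_of_forall_lt_of_nonempty hne (r := 1) ?_
      intro z hz
      have hbdd : BddAbove (Set.range fun μ : spectrum ℂ Mc => ‖(μ : ℂ)‖) := by
        have hcpt : IsCompact ((fun w : ℂ => ‖w‖) '' spectrum ℂ Mc) :=
          (spectrum.isCompact Mc).image continuous_norm
        have := hcpt.bddAbove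
        rwa [Set.image_eq_range] at this
      have hle : ‖z‖ ≤ specRad M := le_ciSup hbdd ⟨z, hz⟩
      have habs : ‖z‖ < 1 := lt_of_le_of_lt hle h
      rw [← NNReal.coe_lt_coe]
      simpa using habs
  obtain ⟨r0, hρr, hr01⟩ := exists_between hρ
  have hr0ne : r0 ≠ ⊤ := ne_top_of_lt (lt_of_lt_of_le hr01 le_top)
  set rr : NNReal := r0.toNNReal with hrr
  have hr0eq : (rr : ENNReal) = r0 := ENNReal.coe_toNNReal hr0ne
  have hT := spectrum.pow_nnnorm_pow_one_div_tendsto_nhds_spectralRadius Mc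
  obtain ⟨N, hN⟩ := eventually_atTop.1 (hT.eventually_lt_const hρr)
  have hbig : ∀ n, N + 1 ≤ n → ‖Mc ^ n‖ ≤ (rr : ℝ) ^ n := by
    intro n hn
    have hn0 : (n : ℝ) ≠ 0 := Nat.cast_ne_zero.2 (by omega)
    have h1 := hN n (by omega)
    have h2 : ((‖Mc ^ n‖₊ : ENNReal) ^ (1 / (n : ℝ))) ^ (n : ℝ) < r0 ^ (n : ℝ) :=
      ENNReal.rpow_lt_rpow h1 (by positivity)
    rw [← ENNReal.rpow_mul, one_div_mul_cancel hn0, ENNReal.rpow_one, ← hr0eq,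
      ENNReal.rpow_natCast, ← ENNReal.coe_pow, ENNReal.coe_lt_coe] at h2
    have h3 : (‖Mc ^ n‖₊ : ℝ) ≤ ((rr ^ n : NNReal) : ℝ) := by exact_mod_cast h2.le
    simpa using h3
  have hrr1 : (rr : ℝ) < 1 := by
    have : (rr : ENNReal) < 1 := hr0eq ▸ hr01
    exact_mod_cast this
  set r' : ℝ := max (rr : ℝ) (1/2) with hr'
  have hr'pos : 0 < r' := lt_of_lt_of_le (by norm_num) (le_max_right _ _)
  have hr'1 : r' < 1 := max_lt hrr1 (by norm_num)
  set c : ℝ := 1 + ∑ n ∈ Finset.range (N + 1), ‖Mc ^ n‖ / r' ^ n with hc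
  have hsnonneg : (0:ℝ) ≤ ∑ n ∈ Finset.range (N + 1), ‖Mc ^ n‖ / r' ^ n :=
    Finset.sum_nonneg fun n _ => div_nonneg (norm_nonneg _) (by positivity)
  have hcpos : 0 < c := by rw [hc]; linarith
  refine ⟨c, r', hcpos, hr'pos, hr'1, ?_⟩
  intro n i j
  refine (hnormentry n i j).trans ?_
  rcases le_or_gt (N + 1) n with hn | hn
  · calc ‖Mc ^ n‖ ≤ (rr : ℝ) ^ n := hbig n hn
      _ ≤ r' ^ n := pow_le_pow_left₀ (by positivity) (le_max_left _ _) n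
      _ ≤ c * r' ^ n := le_mul_of_one_le_left (by positivity) (by rw [hc]; linarith)
  · have heq : ‖Mc ^ n‖ = (‖Mc ^ n‖ / r' ^ n) * r' ^ n := by
      field_simp
    rw [heq]
    refine mul_le_mul_of_nonneg_right ?_ (by positivity)
    have := Finset.single_le_sum
      (f := fun m => ‖Mc ^ m‖ / r' ^ m)
      (fun m _ => div_nonneg (norm_nonneg _) (by positivity))
      (Finset.mem_range.2 hn)
    rw [hc]; linarith

end AuxLemmas

private lemma quad_conj {m n : ℕ} (N : Matrix (Fin m) (Fin n) ℝ) (C : Matrix (Fin m) (Fin m) ℝ)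
    (v : Fin n → ℝ) :
    v ⬝ᵥ (Nᵀ * C * N).mulVec v = (N.mulVec v) ⬝ᵥ C.mulVec (N.mulVec v) := by
  rw [← Matrix.mulVec_mulVec, ← Matrix.mulVec_mulVec, Matrix.dotProduct_mulVec,
    Matrix.vecMul_transpose]

/-- Cost difference lemma (telescoping part). -/
theorem cost_difference_telescoping {d k : ℕ}
    (A : Matrix (Fin d) (Fin d) ℝ) (B : Matrix (Fin d) (Fin k) ℝ)
    (Q : Matrix (Fin d) (Fin d) ℝ) (R : Matrix (Fin k) (Fin k) ℝ)
    (hQ : Q.PosDef) (hR : R.PosDef)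
    (K K' : Matrix (Fin k) (Fin d) ℝ)
    (hK : specRad (A - B * K) < 1) (hK' : specRad (A - B * K') < 1)
    (x : Fin d → ℝ) :
    HasSum
      (fun t : ℕ =>
        Adv A B Q R K (((A - B * K') ^ t).mulVec x)
          (-(K'.mulVec (((A - B * K') ^ t).mulVec x))))
      (x ⬝ᵥ (Pmat A B Q R K').mulVec x - x ⬝ᵥ (Pmat A B Q R K).mulVec x) := by
  classical
  obtain ⟨c, r, hc, hr0, hr1, hb⟩ := entry_pow_bound (A - B * K') hK'
  set M' : Matrix (Fin d) (Fin d) ℝ := A - B * K' with hM'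
  set P : Matrix (Fin d) (Fin d) ℝ := Pmat A B Q R K with hP
  set C' : Matrix (Fin d) (Fin d) ℝ := Q + K'ᵀ * R * K' with hC'
  set xv : ℕ → Fin d → ℝ := fun t => (M' ^ t).mulVec x with hxv
  set X : ℝ := c * ∑ j, |x j| with hX
  have hXnn : 0 ≤ X := mul_nonneg hc.le (Finset.sum_nonneg fun _ _ => abs_nonneg _)
  have hr2 : r ^ 2 < 1 := by nlinarith
  have hxvb : ∀ t i, |xv t i| ≤ X * r ^ t := by
    intro t i
    calc |xv t i| = |∑ j, (M' ^ t) i j * x j| := by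
          simp [hxv, Matrix.mulVec, dotProduct]
      _ ≤ ∑ j, |(M' ^ t) i j * x j| := Finset.abs_sum_le_sum_abs _ _
      _ ≤ ∑ j, (c * r ^ t) * |x j| := Finset.sum_le_sum fun j _ => by
          rw [abs_mul]; exact mul_le_mul_of_nonneg_right (hb t i j) (abs_nonneg _)
      _ = X * r ^ t := by rw [← Finset.mul_sum, hX]; ring
  have hquad : ∀ (D : Matrix (Fin d) (Fin d) ℝ) (t : ℕ),
      |xv t ⬝ᵥ D.mulVec (xv t)| ≤ (X ^ 2 * ∑ i, ∑ j, |D i j|) * (r ^ 2) ^ t := by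
    intro D t
    have h1 : xv t ⬝ᵥ D.mulVec (xv t) = ∑ i, ∑ j, xv t i * (D i j * xv t j) := by
      simp [dotProduct, Matrix.mulVec, Finset.mul_sum]
    rw [h1]
    calc |∑ i, ∑ j, xv t i * (D i j * xv t j)|
        ≤ ∑ i, |∑ j, xv t i * (D i j * xv t j)| := Finset.abs_sum_le_sum_abs _ _
      _ ≤ ∑ i, ∑ j, |xv t i| * (|D i j| * |xv t j|) := Finset.sum_le_sum fun i _ =>
          (Finset.abs_sum_le_sum_abs _ _).trans (le_of_eq (Finset.sum_congr rfl fun j _ => by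
            rw [abs_mul, abs_mul]))
      _ ≤ ∑ i, ∑ j, (X * r ^ t) * (|D i j| * (X * r ^ t)) := by
          refine Finset.sum_le_sum fun i _ => Finset.sum_le_sum fun j _ => ?_
          have hXr : (0:ℝ) ≤ X * r ^ t := mul_nonneg hXnn (pow_nonneg hr0.le t)
          exact mul_le_mul (hxvb t i)
            (mul_le_mul_of_nonneg_left (hxvb t j) (abs_nonneg _))
            (mul_nonneg (abs_nonneg _) (abs_nonneg _)) hXr
      _ = (X ^ 2 * ∑ i, ∑ j, |D i j|) * (r ^ 2) ^ t := by
          have h5 : ∀ i j : Fin d, (X * r ^ t) * (|D i j| * (X * r ^ t))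
              = |D i j| * (X ^ 2 * (r ^ 2) ^ t) := fun i j => by ring
          simp_rw [h5, ← Finset.sum_mul]
          ring
  have hsum : ∀ D : Matrix (Fin d) (Fin d) ℝ,
      Summable fun t => xv t ⬝ᵥ D.mulVec (xv t) := by
    intro D
    refine Summable.of_norm_bounded
      (g := fun t => (X ^ 2 * ∑ i, ∑ j, |D i j|) * (r ^ 2) ^ t)
      ((summable_geometric_of_lt_one (by positivity) hr2).mul_left _) fun t => ?_
    rw [Real.norm_eq_abs]; exact hquad D t
  have htend : ∀ D : Matrix (Fin d) (Fin d) ℝ,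
      Filter.Tendsto (fun t => xv t ⬝ᵥ D.mulVec (xv t)) Filter.atTop (nhds 0) := by
    intro D
    refine squeeze_zero_norm (a := fun t => (X ^ 2 * ∑ i, ∑ j, |D i j|) * (r ^ 2) ^ t)
      (fun t => ?_) ?_
    · rw [Real.norm_eq_abs]; exact hquad D t
    · simpa using (tendsto_pow_atTop_nhds_zero_of_lt_one (by positivity : (0:ℝ) ≤ r ^ 2)
        hr2).const_mul (X ^ 2 * ∑ i, ∑ j, |D i j|)
  set Nf : ℕ → Matrix (Fin d) (Fin d) ℝ := fun t => (M'ᵀ) ^ t * C' * M' ^ t with hNf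
  have hNentry : ∀ (t : ℕ) (i j : Fin d),
      |Nf t i j| ≤ (c ^ 2 * ∑ a, ∑ b, |C' a b|) * (r ^ 2) ^ t := by
    intro t i j
    have h0 : Nf t i j = ∑ b, (∑ a, (M' ^ t) a i * C' a b) * (M' ^ t) b j := by
      simp [hNf, Matrix.mul_apply, ← Matrix.transpose_pow, Matrix.transpose_apply]
    rw [h0]
    calc |∑ b, (∑ a, (M' ^ t) a i * C' a b) * (M' ^ t) b j|
        ≤ ∑ b, |(∑ a, (M' ^ t) a i * C' a b) * (M' ^ t) b j| := Finset.abs_sum_le_sum_abs _ _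
      _ ≤ ∑ b, (∑ a, |(M' ^ t) a i| * |C' a b|) * |(M' ^ t) b j| := by
          refine Finset.sum_le_sum fun b _ => ?_
          rw [abs_mul]
          refine mul_le_mul_of_nonneg_right ?_ (abs_nonneg _)
          refine (Finset.abs_sum_le_sum_abs _ _).trans (le_of_eq ?_)
          exact Finset.sum_congr rfl fun a _ => abs_mul _ _
      _ ≤ ∑ b, (∑ a, (c * r ^ t) * |C' a b|) * (c * r ^ t) := by
          refine Finset.sum_le_sum fun b _ => ?_
          have hcr : (0:ℝ) ≤ c * r ^ t := by positivity
          refine mul_le_mul (Finset.sum_le_sum fun a _ =>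
            mul_le_mul_of_nonneg_right (hb t a i) (abs_nonneg _)) (hb t b j) (abs_nonneg _) ?_
          exact Finset.sum_nonneg fun a _ => mul_nonneg hcr (abs_nonneg _)
      _ = (c ^ 2 * ∑ a, ∑ b, |C' a b|) * (r ^ 2) ^ t := by
          rw [Finset.sum_comm]
          simp_rw [Finset.sum_mul]
          have h6 : ∀ (a b : Fin d), (c * r ^ t) * |C' a b| * (c * r ^ t)
              = |C' a b| * (c ^ 2 * (r ^ 2) ^ t) := fun a b => by ring
          simp_rw [h6, ← Finset.sum_mul]
          ring
  have hNsum : Summable Nf := Pi.summable.2 fun i => Pi.summable.2 fun j =>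
    Summable.of_norm_bounded
      (g := fun t => (c ^ 2 * ∑ a, ∑ b, |C' a b|) * (r ^ 2) ^ t)
      ((summable_geometric_of_lt_one (by positivity) hr2).mul_left _) fun t => by
        rw [Real.norm_eq_abs]; exact hNentry t i j
  have hPK' : Pmat A B Q R K' = ∑' t, Nf t := rfl
  have hNhasSum : HasSum Nf (Pmat A B Q R K') := by rw [hPK']; exact hNsum.hasSum
  have hNentrysum : ∀ i j, HasSum (fun t => Nf t i j) (Pmat A B Q R K' i j) :=
    fun i j => Pi.hasSum.1 (Pi.hasSum.1 hNhasSum i) j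
  have hcseq : HasSum (fun t => xv t ⬝ᵥ C'.mulVec (xv t))
      (x ⬝ᵥ (Pmat A B Q R K').mulVec x) := by
    have h1 : ∀ t, xv t ⬝ᵥ C'.mulVec (xv t) = ∑ i, ∑ j, x i * (Nf t i j * x j) := by
      intro t
      have h2 : xv t ⬝ᵥ C'.mulVec (xv t) = x ⬝ᵥ (Nf t).mulVec x := by
        have h3 := quad_conj (M' ^ t) C' x
        rw [Matrix.transpose_pow] at h3
        exact h3.symm
      rw [h2]
      simp [dotProduct, Matrix.mulVec, Finset.mul_sum]
    have h3 : x ⬝ᵥ (Pmat A B Q R K').mulVec x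
        = ∑ i, ∑ j, x i * (Pmat A B Q R K' i j * x j) := by
      simp [dotProduct, Matrix.mulVec, Finset.mul_sum]
    have h4 : HasSum (fun t => ∑ i, ∑ j, x i * (Nf t i j * x j))
        (∑ i, ∑ j, x i * (Pmat A B Q R K' i j * x j)) :=
      hasSum_sum fun i _ => hasSum_sum fun j _ =>
        ((hNentrysum i j).mul_right (x j)).mul_left (x i)
    rw [h3]
    exact (funext h1).symm ▸ h4
  set g : ℕ → ℝ := fun t => xv t ⬝ᵥ P.mulVec (xv t) with hg
  have hsumg : Summable g := hsum P
  have hsumgs : Summable fun t => g (t + 1) := (summable_nat_add_iff 1).2 hsumg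
  have hsummAll : Summable fun t => xv t ⬝ᵥ C'.mulVec (xv t) + (g (t + 1) - g t) :=
    (hsum C').add (hsumgs.sub hsumg)
  have hg0 : g 0 = x ⬝ᵥ P.mulVec x := by
    simp [hg, hxv]
  have key : HasSum (fun t => xv t ⬝ᵥ C'.mulVec (xv t) + (g (t + 1) - g t))
      (x ⬝ᵥ (Pmat A B Q R K').mulVec x - x ⬝ᵥ P.mulVec x) := by
    rw [hsummAll.hasSum_iff_tendsto_nat]
    have hps : ∀ n, ∑ t ∈ Finset.range n, (xv t ⬝ᵥ C'.mulVec (xv t) + (g (t + 1) - g t))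
        = (∑ t ∈ Finset.range n, xv t ⬝ᵥ C'.mulVec (xv t)) + (g n - g 0) := fun n => by
      rw [Finset.sum_add_distrib, Finset.sum_range_sub]
    have hlim : Filter.Tendsto
        (fun n => (∑ t ∈ Finset.range n, xv t ⬝ᵥ C'.mulVec (xv t)) + (g n - g 0))
        Filter.atTop (nhds ((x ⬝ᵥ (Pmat A B Q R K').mulVec x) + (0 - g 0))) :=
      hcseq.tendsto_sum_nat.add ((htend P).sub tendsto_const_nhds)
    have heq : (x ⬝ᵥ (Pmat A B Q R K').mulVec x) + (0 - g 0)
        = x ⬝ᵥ (Pmat A B Q R K').mulVec x - x ⬝ᵥ P.mulVec x := by rw [hg0]; ring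
    rw [heq] at hlim
    exact Filter.Tendsto.congr (fun n => (hps n).symm) hlim
  have hAdv : ∀ t, Adv A B Q R K (xv t) (-(K'.mulVec (xv t)))
      = xv t ⬝ᵥ C'.mulVec (xv t) + (g (t + 1) - g t) := by
    intro t
    have hx1 : A.mulVec (xv t) + B.mulVec (-(K'.mulVec (xv t))) = xv (t + 1) := by
      show A *ᵥ (xv t) + B *ᵥ (-(K' *ᵥ xv t)) = M' ^ (t + 1) *ᵥ x
      rw [pow_succ', ← Matrix.mulVec_mulVec]
      show A *ᵥ (xv t) + B *ᵥ (-(K' *ᵥ xv t)) = M' *ᵥ (xv t)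
      rw [hM', Matrix.sub_mulVec, Matrix.mulVec_neg, ← Matrix.mulVec_mulVec,
        sub_eq_add_neg]
    have hu : (-(K'.mulVec (xv t))) ⬝ᵥ R.mulVec (-(K'.mulVec (xv t)))
        = (K'.mulVec (xv t)) ⬝ᵥ R.mulVec (K'.mulVec (xv t)) := by
      simp [Matrix.mulVec_neg]
    have hC'q : xv t ⬝ᵥ C'.mulVec (xv t)
        = xv t ⬝ᵥ Q.mulVec (xv t)
          + (K'.mulVec (xv t)) ⬝ᵥ R.mulVec (K'.mulVec (xv t)) := by
      rw [hC', Matrix.add_mulVec, dotProduct_add]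
      congr 1
      exact quad_conj K' R (xv t)
    simp only [Adv, Qval, Vval]
    rw [hx1, hu, hC'q, ← hP]
    show _ = xv t ⬝ᵥ Q.mulVec (xv t) + (K'.mulVec (xv t)) ⬝ᵥ R.mulVec (K'.mulVec (xv t))
      + ((xv (t+1) ⬝ᵥ P.mulVec (xv (t+1))) - xv t ⬝ᵥ P.mulVec (xv t))
    ring
  have hgoal : HasSum (fun t => Adv A B Q R K (xv t) (-(K'.mulVec (xv t))))
      (x ⬝ᵥ (Pmat A B Q R K').mulVec x - x ⬝ᵥ P.mulVec x) := by
    simp only [hAdv]; exact key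
  exact hgoal
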